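/- arXiv:1709.05614 — 6 statements merged into one kernel-verified Lean document; each statement's English description precedes it below -/
import Mathlib

section
/- For any matrix B in SL(2,ℝ) and any unit vector φ in ℝ², we have max{‖B²φ‖, ‖Bφ‖, ‖B⁻¹φ‖} ≥ 1/4. -/
open Matrix

/-!
By Cayley–Hamilton, `B⁻¹ = t - B` and `B² = t B - 1` with `t = tr B`. Writing `x = φ` and
`y = Bφ`, the triangle inequality gives `‖t‖ ≤ ‖B⁻¹φ‖ + ‖Bφ‖` and `1 ≤ ‖t‖ ‖Bφ‖ + ‖B²φ‖`, so the
maximum `m` of the three norms satisfies `1 ≤ 2m² + m`, i.e. `m ≥ 1/2`.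
-/

theorem Matrix.adjugate_fin_two_eq_trace_smul_sub {R : Type*} [CommRing R]
    (A : Matrix (Fin 2) (Fin 2) R) : A.adjugate = A.trace • 1 - A := by
  ext i j
  fin_cases i <;> fin_cases j <;> simp [adjugate_fin_two, trace_fin_two]

theorem Matrix.mul_self_fin_two {R : Type*} [CommRing R] (A : Matrix (Fin 2) (Fin 2) R) :
    A * A = A.trace • A - A.det • 1 := by
  have h := A.mul_adjugate
  rw [adjugate_fin_two_eq_trace_smul_sub, Matrix.mul_sub, Matrix.mul_smul, Matrix.mul_one] at h
  rw [← h]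
  abel

namespace Matrix.SpecialLinearGroup

variable {R : Type*} [CommRing R] (B : SpecialLinearGroup (Fin 2) R)

theorem coe_inv_fin_two :
    ((B⁻¹ : SpecialLinearGroup (Fin 2) R) : Matrix (Fin 2) (Fin 2) R) =
      (B : Matrix (Fin 2) (Fin 2) R).trace • 1 - B := by
  rw [coe_inv, adjugate_fin_two_eq_trace_smul_sub]

theorem coe_mul_self_fin_two :
    ((B * B : SpecialLinearGroup (Fin 2) R) : Matrix (Fin 2) (Fin 2) R) =
      (B : Matrix (Fin 2) (Fin 2) R).trace • (B : Matrix (Fin 2) (Fin 2) R) - 1 := by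
  rw [coe_mul, mul_self_fin_two, B.det_coe, one_smul]

end Matrix.SpecialLinearGroup

theorem one_le_norm_smul_sub_mul_add {𝕜 E : Type*} [NormedField 𝕜] [SeminormedAddCommGroup E]
    [NormedSpace 𝕜 E] (t : 𝕜) {x : E} (hx : ‖x‖ = 1) (y : E) :
    1 ≤ (‖t • x - y‖ + ‖y‖) * ‖y‖ + ‖t • y - x‖ := by
  have ht : ‖t‖ ≤ ‖t • x - y‖ + ‖y‖ :=
    calc ‖t‖ = ‖t • x‖ := by rw [norm_smul, hx, mul_one]
      _ = ‖(t • x - y) + y‖ := by rw [sub_add_cancel]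
      _ ≤ ‖t • x - y‖ + ‖y‖ := norm_add_le _ _
  calc (1 : ℝ) = ‖t • y - (t • y - x)‖ := by rw [sub_sub_cancel, hx]
    _ ≤ ‖t‖ * ‖y‖ + ‖t • y - x‖ := by rw [← norm_smul]; exact norm_sub_le _ _
    _ ≤ (‖t • x - y‖ + ‖y‖) * ‖y‖ + ‖t • y - x‖ := by gcongr

theorem one_half_le_max_norm_smul_sub {𝕜 E : Type*} [NormedField 𝕜] [SeminormedAddCommGroup E]
    [NormedSpace 𝕜 E] (t : 𝕜) {x : E} (hx : ‖x‖ = 1) (y : E) :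
    1 / 2 ≤ max ‖t • y - x‖ (max ‖y‖ ‖t • x - y‖) := by
  set m := max ‖t • y - x‖ (max ‖y‖ ‖t • x - y‖)
  have h₁ : ‖t • y - x‖ ≤ m := le_max_left _ _
  have h₂ : ‖y‖ ≤ m := (le_max_left _ _).trans (le_max_right _ _)
  have h₃ : ‖t • x - y‖ ≤ m := (le_max_right _ _).trans (le_max_right _ _)
  have key : 1 ≤ (m + m) * m + m :=
    (one_le_norm_smul_sub_mul_add t hx y).trans (by gcongr)
  nlinarith [norm_nonneg y]

theorem sl2_vector_growth
    (B : Matrix.SpecialLinearGroup (Fin 2) ℝ) (φ : EuclideanSpace ℝ (Fin 2))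
    (hφ : ‖φ‖ = 1) :
    (1 / 4 : ℝ) ≤
      max ‖Matrix.toEuclideanCLM (𝕜 := ℝ) ((B * B : Matrix.SpecialLinearGroup (Fin 2) ℝ) :
            Matrix (Fin 2) (Fin 2) ℝ) φ‖
        (max ‖Matrix.toEuclideanCLM (𝕜 := ℝ) (B : Matrix (Fin 2) (Fin 2) ℝ) φ‖
          ‖Matrix.toEuclideanCLM (𝕜 := ℝ) ((B⁻¹ : Matrix.SpecialLinearGroup (Fin 2) ℝ) :
            Matrix (Fin 2) (Fin 2) ℝ) φ‖) := by
  rw [SpecialLinearGroup.coe_mul_self_fin_two, SpecialLinearGroup.coe_inv_fin_two]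
  simpa using (one_half_le_max_norm_smul_sub (B : Matrix (Fin 2) (Fin 2) ℝ).trace hφ
    (toEuclideanCLM (𝕜 := ℝ) (B : Matrix (Fin 2) (Fin 2) ℝ) φ)).trans' (by norm_num)
end

section
/- For any matrix B in SL(2,ℝ) and any unit vector φ in ℝ², if ‖Bφ‖ < 1/4 and ‖B⁻¹φ‖ < 1/4, then ‖B²φ‖ ≥ 1/4. -/
open Matrix

lemma adjugate_eq_trace_smul_one_sub (A : Matrix (Fin 2) (Fin 2) ℝ) :
    adjugate A = A.trace • 1 - A := by
  rw [Matrix.adjugate_fin_two, Matrix.trace_fin_two]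
  ext i j
  fin_cases i <;> fin_cases j <;> simp [Matrix.one_apply]

theorem sl2_square_growth
    (B : Matrix.SpecialLinearGroup (Fin 2) ℝ) (φ : EuclideanSpace ℝ (Fin 2))
    (hφ : ‖φ‖ = 1)
    (h1 : ‖Matrix.toEuclideanCLM (𝕜 := ℝ) (B : Matrix (Fin 2) (Fin 2) ℝ) φ‖ < 1 / 4)
    (h2 : ‖Matrix.toEuclideanCLM (𝕜 := ℝ) ((B⁻¹ : Matrix.SpecialLinearGroup (Fin 2) ℝ) :
            Matrix (Fin 2) (Fin 2) ℝ) φ‖ < 1 / 4) :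
    (1 / 4 : ℝ) ≤
      ‖Matrix.toEuclideanCLM (𝕜 := ℝ) ((B * B : Matrix.SpecialLinearGroup (Fin 2) ℝ) :
          Matrix (Fin 2) (Fin 2) ℝ) φ‖ := by
  set A : Matrix (Fin 2) (Fin 2) ℝ := (B : Matrix (Fin 2) (Fin 2) ℝ) with hA
  set t : ℝ := A.trace with ht
  set f := Matrix.toEuclideanCLM (𝕜 := ℝ) (n := Fin 2)
  have hinv : ((B⁻¹ : Matrix.SpecialLinearGroup (Fin 2) ℝ) : Matrix (Fin 2) (Fin 2) ℝ)
      = t • 1 - A := by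
    rw [Matrix.SpecialLinearGroup.coe_inv, adjugate_eq_trace_smul_one_sub]
  -- Cayley-Hamilton: A * A = t • A - 1
  have hCH : A * A = t • A - 1 := by
    have h := Matrix.mul_adjugate A
    rw [adjugate_eq_trace_smul_one_sub, B.det_coe] at h
    rw [Matrix.mul_sub, Matrix.mul_smul, Matrix.mul_one, sub_eq_iff_eq_add] at h
    rw [h]; simp
  -- trace bound
  have hfinv : f ((B⁻¹ : Matrix.SpecialLinearGroup (Fin 2) ℝ) : Matrix (Fin 2) (Fin 2) ℝ) φ
      = t • φ - f A φ := by
    rw [hinv, map_sub, _root_.map_smul, _root_.map_one]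
    simp
  have htr : |t| < 1 / 2 := by
    have : t • φ = f ((B⁻¹ : Matrix.SpecialLinearGroup (Fin 2) ℝ) : Matrix (Fin 2) (Fin 2) ℝ) φ
        + f A φ := by rw [hfinv]; abel
    have hnorm : ‖t • φ‖ < 1 / 2 := by
      rw [this]
      calc ‖_ + _‖ ≤ _ + _ := norm_add_le _ _
        _ < 1 / 4 + 1 / 4 := by exact add_lt_add h2 h1
        _ = 1 / 2 := by norm_num
    rwa [norm_smul, hφ, mul_one, Real.norm_eq_abs] at hnorm
  have hsq : f ((B * B : Matrix.SpecialLinearGroup (Fin 2) ℝ) : Matrix (Fin 2) (Fin 2) ℝ) φ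
      = t • f A φ - φ := by
    have : ((B * B : Matrix.SpecialLinearGroup (Fin 2) ℝ) : Matrix (Fin 2) (Fin 2) ℝ) = A * A := by
      simp [hA]
    rw [this, hCH, map_sub, _root_.map_smul, _root_.map_one]
    simp
  rw [hsq]
  have h3 : ‖t • f A φ‖ ≤ 1 / 8 := by
    rw [norm_smul, Real.norm_eq_abs]
    nlinarith [norm_nonneg (f A φ), abs_nonneg t]
  calc (1 / 4 : ℝ) ≤ ‖φ‖ - ‖t • f A φ‖ := by rw [hφ]; linarith
    _ ≤ ‖t • f A φ - φ‖ := by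
        rw [norm_sub_rev]
        have := norm_sub_norm_le φ (t • f A φ)
        linarith
end

section
/- Let ω be an irrational real number with continued fraction convergents p_n/q_n. Then limsup_{k→∞} (-ln ‖kω‖)/k = limsup_{n→∞} (ln q_{n+1})/q_n, where ‖x‖ denotes the distance from x to the nearest integer. -/
/-!
Write `qₙ` for the continued fraction denominators and `εₙ = qₙ ω - pₙ`. Consecutive pairs
`(qₙ, pₙ)`, `(qₙ₊₁, pₙ₊₁)` are unimodular and `εₙ`, `εₙ₊₁` have opposite signs, which gives
`qₙ₊₁ |εₙ| + qₙ |εₙ₊₁| = 1` and Lagrange's best approximation property: `‖kω‖ ≥ |εₙ|` for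
`0 < k < qₙ₊₁`. Together with `|εₙ₊₁| ≤ 1 / qₙ₊₂` and `qₙ₊₂ ≥ 2 qₙ` this squeezes
`1 / (2 qₙ₊₁) ≤ ‖qₙ ω‖ ≤ 1 / qₙ₊₁`. Hence along `k = qₙ` the quantity `-log ‖kω‖ / k` is at least
`log qₙ₊₁ / qₙ`, while for `qₙ ≤ k < qₙ₊₁` it is at most `log qₙ₊₁ / qₙ + log 2 / k`.
-/

open Filter

/-- Distance from a real number to the nearest integer. -/
noncomputable def distToInt (x : ℝ) : ℝ := |x - round x|

open Topology

theorem abs_add_eq_abs_add_abs_of_mul_nonneg {R : Type*} [Ring R] [LinearOrder R]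
    [IsStrictOrderedRing R] {x y : R} (h : 0 ≤ x * y) : |x + y| = |x| + |y| :=
  (abs_add_eq_add_abs_iff x y).2 (mul_nonneg_iff.1 h)

section Unimodular

variable {R : Type*} [CommRing R] [LinearOrder R] [IsStrictOrderedRing R] {ω : R} {p q p' q' : ℤ}

theorem mul_abs_add_mul_abs_eq_one (hdet : |p * q' - q * p'| = 1) (hq : 0 ≤ q) (hq' : 0 ≤ q')
    (hsign : (q * ω - p) * (q' * ω - p') ≤ 0) :
    q' * |q * ω - p| + q * |q' * ω - p'| = 1 := by
  have hq : (0 : R) ≤ q := by exact_mod_cast hq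
  have hq' : (0 : R) ≤ q' := by exact_mod_cast hq'
  have hdet : |(p : R) * q' - q * p'| = 1 := by exact_mod_cast hdet
  have hsplit : (p : R) * q' - q * p' = -(q' * (q * ω - p) + -(q * (q' * ω - p'))) := by ring
  rw [hsplit, abs_neg, abs_add_eq_abs_add_abs_of_mul_nonneg
    (by nlinarith [mul_nonpos_of_nonneg_of_nonpos (mul_nonneg hq hq') hsign]), abs_neg, abs_mul,
    abs_mul, abs_of_nonneg hq, abs_of_nonneg hq'] at hdet
  exact hdet

theorem abs_mul_sub_le_abs_mul_sub_of_lt (hdet : |p * q' - q * p'| = 1) (hq : 0 ≤ q)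
    (hsign : (q * ω - p) * (q' * ω - p') ≤ 0) {k m : ℤ} (hk : 0 < k) (hkq' : k < q') :
    |q * ω - p| ≤ |k * ω - m| := by
  have hd : (p * q' - q * p') * (p * q' - q * p') = 1 := by rw [← abs_mul_abs_self, hdet, mul_one]
  obtain ⟨a, b, hk_eq, hm_eq⟩ : ∃ a b : ℤ, a * q + b * q' = k ∧ a * p + b * p' = m :=
    -- Cramer's rule, the determinant being its own inverse
    ⟨(p * q' - q * p') * (m * q' - k * p'), (p * q' - q * p') * (k * p - m * q),
      by linear_combination k * hd, by linear_combination m * hd⟩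
  have ha : a ≠ 0 := by
    rintro rfl
    rcases le_or_gt b 0 with hb | hb <;> nlinarith
  have hab : a * b ≤ 0 := by
    by_contra! h
    rcases mul_pos_iff.1 h with ⟨ha, hb⟩ | ⟨ha, hb⟩ <;> nlinarith
  have hsplit : (k : R) * ω - m = a * (q * ω - p) + b * (q' * ω - p') := by
    rw [← hk_eq, ← hm_eq]; push_cast; ring
  have habK : (a : R) * b ≤ 0 := by exact_mod_cast hab
  have ha1 : (1 : R) ≤ |(a : R)| := by exact_mod_cast Int.one_le_abs ha
  rw [hsplit, abs_add_eq_abs_add_abs_of_mul_nonneg (by nlinarith), abs_mul, abs_mul]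
  nlinarith [abs_nonneg ((q : R) * ω - p), abs_nonneg (b : R), abs_nonneg ((q' : R) * ω - p')]

end Unimodular

namespace GenContFract

open GenContFract (of)

variable {K : Type*} [Field K] [LinearOrder K] [FloorRing K] {v : K} {n : ℕ}

theorem exists_int_eq_contsAux (v : K) (n : ℕ) : ∃ a b : ℤ, (of v).contsAux n = ⟨a, b⟩ := by
  induction n using Nat.twoStepInduction with
  | zero => exact ⟨1, 0, by simp [zeroth_contAux_eq_one_zero]⟩
  | one => exact ⟨⌊v⌋, 1, by simp [first_contAux_eq_h_one, of_h_eq_floor]⟩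
  | more n ih₀ ih₁ =>
    obtain ⟨a₀, b₀, h₀⟩ := ih₀
    obtain ⟨a₁, b₁, h₁⟩ := ih₁
    cases hs : (of v).s.get? n with
    | none => exact ⟨a₁, b₁, by rw [contsAux_stable_step_of_terminated hs, h₁]⟩
    | some gp =>
      obtain ⟨ha, z, hz⟩ := of_partNum_eq_one_and_exists_int_partDen_eq hs
      exact ⟨z * a₁ + a₀, z * b₁ + b₀, by simp [contsAux_recurrence hs h₀ h₁, ha, hz]⟩

/- The floors only change the type: `nums n` and `dens n` are integers already
(`intCast_intNum`, `natCast_natDen`). -/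
noncomputable def intNum (v : K) (n : ℕ) : ℤ := ⌊(of v).nums n⌋

variable [IsStrictOrderedRing K]

noncomputable def natDen (v : K) (n : ℕ) : ℕ := ⌊(of v).dens n⌋₊

theorem intCast_intNum (v : K) (n : ℕ) : (intNum v n : K) = (of v).nums n := by
  obtain ⟨a, b, h⟩ := exists_int_eq_contsAux v (n + 1)
  rw [intNum, num_eq_conts_a, nth_cont_eq_succ_nth_contAux, h, Int.floor_intCast]

theorem natCast_natDen (v : K) (n : ℕ) : (natDen v n : K) = (of v).dens n := by
  obtain ⟨a, b, h⟩ := exists_int_eq_contsAux v (n + 1)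
  have hb : (of v).dens n = b := by rw [den_eq_conts_b, nth_cont_eq_succ_nth_contAux, h]
  have : (0 : K) ≤ b := hb ▸ zero_le_of_den
  lift b to ℕ using by exact_mod_cast this
  rw [natDen, hb, Int.cast_natCast, Nat.floor_natCast]

theorem dens_mono (v : K) : Monotone (of v).dens :=
  monotone_nat_of_le_succ fun _ ↦ of_den_mono

theorem one_le_dens (v : K) (n : ℕ) : 1 ≤ (of v).dens n :=
  zeroth_den_eq_one.symm.le.trans (dens_mono v n.zero_le)

theorem dens_add_dens_le (h : ¬(of v).TerminatedAt (n + 1)) :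
    (of v).dens n + (of v).dens (n + 1) ≤ (of v).dens (n + 2) := by
  obtain ⟨gp, hgp⟩ := Option.ne_none_iff_exists'.1 h
  have hb : 1 ≤ gp.b := of_one_le_get?_partDen (partDen_eq_s_b hgp)
  rw [dens_recurrence hgp rfl rfl, of_partNum_eq_one (partNum_eq_s_a hgp)]
  nlinarith [one_le_dens v (n + 1)]

theorem zero_lt_neg_one_pow_mul_sub_convs (h : ¬(of v).TerminatedAt n) :
    0 < (-1) ^ n * (v - (of v).convs n) := by
  obtain ⟨ifp₁, hifp₁⟩ := Option.ne_none_iff_exists'.1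
    (mt of_terminatedAt_n_iff_succ_nth_intFractPair_stream_eq_none.2 h)
  obtain ⟨ifp, hifp, hfr, -⟩ := IntFractPair.succ_nth_stream_eq_some_iff.1 hifp₁
  have hfr : 0 < ifp.fr := (IntFractPair.nth_stream_fr_nonneg hifp).lt_of_ne' hfr
  have hB : 0 < ((of v).contsAux (n + 1)).b := by
    rw [← nth_cont_eq_succ_nth_contAux, ← den_eq_conts_b]
    exact zero_lt_one.trans_le (one_le_dens v n)
  have hpB : 0 ≤ ((of v).contsAux n).b := zero_le_of_contsAux_b
  rw [sub_convs_eq hifp, if_neg hfr.ne', mul_div_assoc', ← pow_add, ← two_mul, pow_mul,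
    neg_one_sq, one_pow]
  positivity

theorem sub_convs_mul_sub_convs_succ_neg (h : ¬(of v).TerminatedAt (n + 1)) :
    (v - (of v).convs n) * (v - (of v).convs (n + 1)) < 0 := by
  have h₀ := zero_lt_neg_one_pow_mul_sub_convs (mt (terminated_stable n.le_succ) h)
  have h₁ := zero_lt_neg_one_pow_mul_sub_convs h
  rw [pow_succ] at h₁
  have hsq : ((-1 : K) ^ n) ^ 2 = 1 := by rw [← pow_mul, mul_comm, pow_mul, neg_one_sq, one_pow]
  nlinarith [mul_pos h₀ h₁]

theorem natDen_zero (v : K) : natDen v 0 = 1 := by simp [natDen, zeroth_den_eq_one]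

theorem natDen_mono (v : K) : Monotone (natDen v) := fun m n hmn ↦ by
  exact_mod_cast (natCast_natDen v m ▸ natCast_natDen v n ▸ dens_mono v hmn)

theorem natDen_pos (v : K) (n : ℕ) : 0 < natDen v n :=
  (natDen_zero v ▸ zero_lt_one).trans_le (natDen_mono v n.zero_le)

theorem tendsto_natDen (hv : ¬(of v).Terminates) : Tendsto (natDen v) atTop atTop := by
  have hfib (n : ℕ) : Nat.fib (n + 2) ≤ natDen v (n + 1) := by
    have := succ_nth_fib_le_of_nth_den (v := v) (n := n + 1) (Or.inr fun h ↦ hv ⟨n, h⟩)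
    rw [← natCast_natDen] at this
    exact_mod_cast this
  exact (tendsto_add_atTop_iff_nat 1).1
    (tendsto_atTop_mono hfib Nat.fib_add_two_strictMono.tendsto_atTop)

theorem natDen_mul_sub_intNum_eq (v : K) (n : ℕ) :
    (natDen v n : K) * v - intNum v n = (of v).dens n * (v - (of v).convs n) := by
  have h : (of v).dens n ≠ 0 := (zero_lt_one.trans_le (one_le_dens v n)).ne'
  rw [natCast_natDen, intCast_intNum, conv_eq_num_div_den, mul_sub, mul_div_cancel₀ _ h]

theorem abs_natDen_mul_sub_intNum_le (h : ¬(of v).TerminatedAt n) :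
    |(natDen v n : K) * v - intNum v n| ≤ 1 / natDen v (n + 1) := by
  have hpos : 0 < (of v).dens n := zero_lt_one.trans_le (one_le_dens v n)
  have hpos' : 0 < (of v).dens (n + 1) := zero_lt_one.trans_le (one_le_dens v (n + 1))
  rw [natDen_mul_sub_intNum_eq, abs_mul, abs_of_pos hpos, natCast_natDen]
  calc (of v).dens n * |v - (of v).convs n|
      ≤ (of v).dens n * (1 / ((of v).dens n * (of v).dens (n + 1))) := by
        gcongr; exact abs_sub_convs_le h
    _ = 1 / (of v).dens (n + 1) := by field_simp

theorem natDen_mul_sub_intNum_mul_neg (h : ¬(of v).TerminatedAt (n + 1)) :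
    ((natDen v n : K) * v - intNum v n) * ((natDen v (n + 1) : K) * v - intNum v (n + 1)) < 0 := by
  have hpos := mul_pos (zero_lt_one.trans_le (one_le_dens v n))
    (zero_lt_one.trans_le (one_le_dens v (n + 1)))
  rw [natDen_mul_sub_intNum_eq, natDen_mul_sub_intNum_eq, mul_mul_mul_comm]
  exact mul_neg_of_pos_of_neg hpos (sub_convs_mul_sub_convs_succ_neg h)

theorem abs_intNum_mul_natDen_sub (h : ¬(of v).TerminatedAt n) :
    |intNum v n * (natDen v (n + 1) : ℤ) - natDen v n * intNum v (n + 1)| = 1 := by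
  have hdet : ((intNum v n * (natDen v (n + 1) : ℤ) - natDen v n * intNum v (n + 1) : ℤ) : K) =
      ((-1) ^ (n + 1) : ℤ) := by
    push_cast
    rw [intCast_intNum, intCast_intNum, natCast_natDen, natCast_natDen]
    exact SimpContFract.determinant (s := SimpContFract.of v) h
  rw [Int.cast_inj.1 hdet, abs_pow, abs_neg, abs_one, one_pow]

theorem abs_natDen_mul_sub_intNum_le_abs (hv : ¬(of v).Terminates) {n k : ℕ} (m : ℤ)
    (hk : 0 < k) (hk' : k < natDen v (n + 1)) :
    |(natDen v n : K) * v - intNum v n| ≤ |(k : K) * v - m| := by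
  have hsign := (natDen_mul_sub_intNum_mul_neg fun h ↦ hv ⟨n + 1, h⟩).le
  have := abs_mul_sub_le_abs_mul_sub_of_lt (ω := v) (abs_intNum_mul_natDen_sub fun h ↦ hv ⟨n, h⟩)
    (Int.natCast_nonneg _) (by exact_mod_cast hsign) (m := m) (Int.natCast_pos.2 hk)
    (by exact_mod_cast hk')
  simpa using this

theorem one_div_two_mul_natDen_succ_le (hv : ¬(of v).Terminates) (n : ℕ) :
    1 / (2 * natDen v (n + 1) : K) ≤ |(natDen v n : K) * v - intNum v n| := by
  have hsum := mul_abs_add_mul_abs_eq_one (ω := v) (abs_intNum_mul_natDen_sub fun h ↦ hv ⟨n, h⟩)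
    (Int.natCast_nonneg _) (Int.natCast_nonneg _)
    (by exact_mod_cast (natDen_mul_sub_intNum_mul_neg fun h ↦ hv ⟨n + 1, h⟩).le)
  push_cast at hsum
  have hnext := abs_natDen_mul_sub_intNum_le (v := v) fun h ↦ hv ⟨n + 1, h⟩
  have hgrowth : 2 * (natDen v n : K) ≤ natDen v (n + 2) := by
    have := dens_add_dens_le (v := v) fun h ↦ hv ⟨n + 1, h⟩
    have := dens_mono v n.le_succ
    simp only [← natCast_natDen] at *
    linarith
  have hpos : (0 : K) < natDen v (n + 1) := by
    rw [natCast_natDen]; exact zero_lt_one.trans_le (one_le_dens v _)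
  have hpos₂ : (0 : K) < natDen v (n + 2) := by
    rw [natCast_natDen]; exact zero_lt_one.trans_le (one_le_dens v _)
  have hhalf : (natDen v n : K) * |(natDen v (n + 1) : K) * v - intNum v (n + 1)| ≤ 1 / 2 := by
    calc (natDen v n : K) * |(natDen v (n + 1) : K) * v - intNum v (n + 1)|
        ≤ natDen v n * (1 / natDen v (n + 2)) := by gcongr
      _ ≤ 1 / 2 := by rw [mul_one_div, div_le_div_iff₀ hpos₂ two_pos]; linarith
  rw [div_le_iff₀ (by positivity)]
  linarith

end GenContFract

section Limsup

variable {α β : Type*} {la : Filter α} {lb : Filter β}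

theorem limsup_le_limsup_of_le_comp_add [la.NeBot] {f : α → EReal} {g : β → EReal} {N : α → β}
    {w : α → ℝ} (hN : Tendsto N la lb) (hw : Tendsto w la (𝓝 0))
    (h : ∀ᶠ a in la, f a ≤ g (N a) + w a) : limsup f la ≤ limsup g lb := by
  have hw' : limsup (fun a ↦ (w a : EReal)) la = 0 :=
    (EReal.tendsto_coe.2 hw).limsup_eq
  calc limsup f la ≤ limsup ((g ∘ N) + fun a ↦ (w a : EReal)) la := limsup_le_limsup h
    _ ≤ limsup (g ∘ N) la + limsup (fun a ↦ (w a : EReal)) la :=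
      EReal.limsup_add_le (.inr (by simp [hw'])) (.inr (by simp [hw']))
    _ = limsup (g ∘ N) la := by rw [hw', add_zero]
    _ ≤ limsup g lb := hN.limsup_comp_le_limsup

end Limsup

theorem Nat.exists_le_and_lt_succ_of_tendsto_atTop {u : ℕ → ℕ} (hu : Tendsto u atTop atTop)
    {k : ℕ} (hk : u 0 ≤ k) : ∃ n, u n ≤ k ∧ k < u (n + 1) := by
  classical
  have hex : ∃ m, k < u m := (hu.eventually_gt_atTop k).exists
  obtain ⟨n, hn⟩ : ∃ n, Nat.find hex = n + 1 :=
    Nat.exists_eq_add_one.2 (Nat.pos_of_ne_zero fun h ↦ (h ▸ Nat.find_spec hex).not_ge hk)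
  exact ⟨n, not_lt.1 (Nat.find_min hex (by omega)), hn ▸ Nat.find_spec hex⟩

theorem Monotone.tendsto_atTop_of_lt_comp_succ {u N : ℕ → ℕ} (hu : Monotone u)
    (hN : ∀ᶠ k in atTop, k < u (N k + 1)) : Tendsto N atTop atTop := by
  refine tendsto_atTop.2 fun M ↦ ?_
  filter_upwards [hN, eventually_ge_atTop (u M)] with k hk hMk
  by_contra! h
  exact (hk.trans_le (hu h)).not_ge hMk

open GenContFract
open GenContFract (of)

theorem distToInt_le_abs_sub_intCast (x : ℝ) (m : ℤ) : distToInt x ≤ |x - m| := round_le x m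

theorem Irrational.distToInt_pos {x : ℝ} (hx : Irrational x) : 0 < distToInt x :=
  abs_pos.2 (sub_ne_zero.2 (hx.ne_int _))

theorem GenContFract.not_terminates_of_irrational {ω : ℝ} (hω : Irrational ω) :
    ¬(of ω).Terminates := fun h ↦ by
  obtain ⟨q, rfl⟩ := (terminates_iff_rat ω).1 h
  exact q.not_irrational hω

section DistToInt

variable {ω : ℝ}

theorem distToInt_natDen_mul_le (hω : Irrational ω) (n : ℕ) :
    distToInt (natDen ω n * ω) ≤ 1 / natDen ω (n + 1) :=
  (distToInt_le_abs_sub_intCast _ _).trans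
    (abs_natDen_mul_sub_intNum_le fun h ↦ not_terminates_of_irrational hω ⟨n, h⟩)

theorem one_div_two_mul_natDen_succ_le_distToInt (hω : Irrational ω) {n k : ℕ} (hk : 0 < k)
    (hk' : k < natDen ω (n + 1)) : 1 / (2 * natDen ω (n + 1) : ℝ) ≤ distToInt (k * ω) :=
  (one_div_two_mul_natDen_succ_le (not_terminates_of_irrational hω) n).trans
    (abs_natDen_mul_sub_intNum_le_abs (not_terminates_of_irrational hω) _ hk hk')

theorem log_dens_succ_div_dens_le (hω : Irrational ω) (n : ℕ) :
    Real.log ((of ω).dens (n + 1)) / (of ω).dens n ≤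
      -Real.log (distToInt (natDen ω n * ω)) / natDen ω n := by
  have hd := (hω.natCast_mul (natDen_pos ω n).ne').distToInt_pos
  have hq' : (0 : ℝ) < natDen ω (n + 1) := Nat.cast_pos.2 (natDen_pos ω _)
  rw [← natCast_natDen, ← natCast_natDen]
  gcongr
  rw [le_neg, ← Real.log_inv, inv_eq_one_div]
  exact Real.log_le_log hd (distToInt_natDen_mul_le hω n)

theorem neg_log_distToInt_div_le (hω : Irrational ω) {n k : ℕ} (hk : natDen ω n ≤ k)
    (hk' : k < natDen ω (n + 1)) :
    -Real.log (distToInt (k * ω)) / k ≤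
      Real.log ((of ω).dens (n + 1)) / (of ω).dens n + Real.log 2 / k := by
  have hk₀ : 0 < k := (natDen_pos ω n).trans_le hk
  have hq : (0 : ℝ) < natDen ω n := Nat.cast_pos.2 (natDen_pos ω _)
  have hq' : (1 : ℝ) ≤ natDen ω (n + 1) := Nat.one_le_cast.2 (natDen_pos ω _)
  have hlog : -Real.log (distToInt (k * ω)) ≤ Real.log 2 + Real.log (natDen ω (n + 1)) := by
    rw [← Real.log_mul two_ne_zero (by positivity), neg_le, ← Real.log_inv, inv_eq_one_div]
    exact Real.log_le_log (by positivity) (one_div_two_mul_natDen_succ_le_distToInt hω hk₀ hk')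
  rw [← natCast_natDen, ← natCast_natDen]
  calc -Real.log (distToInt (k * ω)) / k
      ≤ (Real.log 2 + Real.log (natDen ω (n + 1))) / k := by gcongr
    _ = Real.log (natDen ω (n + 1)) / k + Real.log 2 / k := by ring
    _ ≤ Real.log (natDen ω (n + 1)) / natDen ω n + Real.log 2 / k := by
      gcongr

end DistToInt

theorem limsup_log_dens_eq_beta (ω : ℝ) (hω : Irrational ω) :
    limsup (fun k : ℕ =>
        ((-Real.log (distToInt (k * ω)) / k : ℝ) : EReal)) atTop =
      limsup (fun n : ℕ =>
        ((Real.log ((GenContFract.of ω).dens (n + 1)) /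
            (GenContFract.of ω).dens n : ℝ) : EReal)) atTop := by
  have hden := tendsto_natDen (not_terminates_of_irrational hω)
  apply le_antisymm
  · choose! N hN using fun k (hk : 1 ≤ k) ↦
      Nat.exists_le_and_lt_succ_of_tendsto_atTop hden (k := k) (by rwa [natDen_zero])
    have hN' : ∀ᶠ k in atTop, natDen ω (N k) ≤ k ∧ k < natDen ω (N k + 1) :=
      eventually_atTop.2 ⟨1, hN⟩
    refine limsup_le_limsup_of_le_comp_add
      ((natDen_mono ω).tendsto_atTop_of_lt_comp_succ (hN'.mono fun _ hk ↦ hk.2))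
      (tendsto_const_div_atTop_nhds_zero_nat (Real.log 2)) (hN'.mono fun k hk ↦ ?_)
    exact_mod_cast neg_log_distToInt_div_le hω hk.1 hk.2
  · refine (limsup_le_limsup (.of_forall fun n ↦ ?_)).trans hden.limsup_comp_le_limsup
    exact EReal.coe_le_coe_iff.2 (log_dens_succ_div_dens_le hω n)
end

section
/- Let q ∈ ℝ be locally bounded and u : ℝ → ℝ twice differentiable with −u'' + q u = 0 on ℝ (where q(x) = V(x) − E is bounded, |q| ≤ M). If u ∈ L²(ℝ), then limsup_{x→∞} (|u'(x)|² + |u(x)|²)^{1/2} = 0, i.e., (u'(x), u(x)) → 0 as x → ∞. -/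
/-!
The energy `w = u' ^ 2 + u ^ 2` satisfies `|w'| = |2 u u' (q + 1)| ≤ (M + 1) w`, so by Gronwall
it varies by at most a factor `exp (4 (M + 1))` on a window `[x₀, x₀ + 4]`. On such a window `u`
cannot stay small (otherwise `u'` would carry the energy and, by the mean value theorem, move
`u`), and since `u'` is controlled by the energy, `u ^ 2` stays large on a short subinterval.
Hence `w x₀ ≲ ∫ x₀..x₀ + 4, u ^ 2`, and the right side tends to `0` because `u ∈ L²`.
-/

open MeasureTheory Filter Set Real Topology

section Gronwall

variable {w w' : ℝ → ℝ} {K : ℝ}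

theorem le_mul_exp_of_hasDerivAt_le (hw : ∀ x, HasDerivAt w (w' x) x)
    (hK : ∀ x, w' x ≤ K * w x) {s t : ℝ} (hst : s ≤ t) :
    w t ≤ w s * exp (K * (t - s)) := by
  have hderiv (x : ℝ) : HasDerivAt (fun x => w x * exp (-K * x))
      ((w' x - K * w x) * exp (-K * x)) x :=
    ((hw x).mul ((hasDerivAt_id' x).const_mul (-K)).exp).congr_deriv (by ring)
  have hanti : Antitone fun x => w x * exp (-K * x) :=
    antitone_of_hasDerivAt_nonpos hderiv fun x =>
      mul_nonpos_of_nonpos_of_nonneg (by linarith [hK x]) (exp_nonneg _)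
  calc w t = w t * exp (-K * t) * exp (K * t) := by rw [mul_assoc, ← exp_add]; simp
    _ ≤ w s * exp (-K * s) * exp (K * t) := mul_le_mul_of_nonneg_right (hanti hst) (exp_nonneg _)
    _ = w s * exp (K * (t - s)) := by rw [mul_assoc, ← exp_add]; ring_nf

theorem mul_exp_le_of_le_hasDerivAt (hw : ∀ x, HasDerivAt w (w' x) x)
    (hK : ∀ x, -(K * w x) ≤ w' x) {s t : ℝ} (hst : s ≤ t) :
    w s * exp (-K * (t - s)) ≤ w t := by
  have hderiv (x : ℝ) : HasDerivAt (fun x => w x * exp (K * x))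
      ((w' x + K * w x) * exp (K * x)) x :=
    ((hw x).mul ((hasDerivAt_id' x).const_mul K).exp).congr_deriv (by ring)
  have hmono : Monotone fun x => w x * exp (K * x) :=
    monotone_of_hasDerivAt_nonneg hderiv fun x =>
      mul_nonneg (by linarith [hK x]) (exp_nonneg _)
  calc w s * exp (-K * (t - s)) = w s * exp (K * s) * exp (-K * t) := by
        rw [mul_assoc, ← exp_add]; ring_nf
    _ ≤ w t * exp (K * t) * exp (-K * t) := mul_le_mul_of_nonneg_right (hmono hst) (exp_nonneg _)
    _ = w t := by rw [mul_assoc, ← exp_add]; simp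

end Gronwall

def energy (u u' : ℝ → ℝ) (x : ℝ) : ℝ := u' x ^ 2 + u x ^ 2

theorem exists_sq_ge_half_of_le_energy {u u' : ℝ → ℝ} (hu : ∀ x, HasDerivAt u (u' x) x)
    {a s : ℝ} (ha : ∀ x ∈ Icc s (s + 3), a ≤ energy u u' x) :
    ∃ y ∈ Icc s (s + 3), a / 2 ≤ u y ^ 2 := by
  by_contra! hsmall
  obtain ⟨c, hc, hslope⟩ := exists_hasDerivAt_eq_slope u u' (by linarith : s < s + 3)
    (fun x _ => (hu x).continuousAt.continuousWithinAt) (fun x _ => hu x)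
  have hc' : c ∈ Icc s (s + 3) := Ioo_subset_Icc_self hc
  have hs := hsmall s ⟨le_rfl, by linarith⟩
  have hs3 := hsmall (s + 3) ⟨by linarith, le_rfl⟩
  have hslope' : u' c * 3 = u (s + 3) - u s := by rw [hslope]; ring
  have hderiv : 9 * u' c ^ 2 ≤ 2 * (u (s + 3) ^ 2 + u s ^ 2) :=
    calc 9 * u' c ^ 2 = (u (s + 3) - u s) ^ 2 := by rw [← hslope']; ring
      _ ≤ 2 * (u (s + 3) ^ 2 + u s ^ 2) := by nlinarith [sq_nonneg (u (s + 3) + u s)]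
  have hc_energy := ha c hc'
  unfold energy at hc_energy
  linarith [hsmall c hc', sq_nonneg (u s)]

theorem sq_div_four_le_sq_of_abs_deriv_le {u u' : ℝ → ℝ} (hu : ∀ x, HasDerivAt u (u' x) x)
    {y r L : ℝ} (hL : ∀ x ∈ Icc y (y + r), |u' x| ≤ L) (hLr : 2 * (L * r) ≤ |u y|) :
    ∀ z ∈ Icc y (y + r), u y ^ 2 / 4 ≤ u z ^ 2 := by
  intro z hz
  have hL0 : 0 ≤ L := (abs_nonneg _).trans (hL y ⟨le_rfl, hz.1.trans hz.2⟩)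
  have hlip : |u z - u y| ≤ L * (z - y) :=
    norm_image_sub_le_of_norm_deriv_le_segment' (fun x _ => (hu x).hasDerivWithinAt)
      (fun x hx => hL x (Ico_subset_Icc_self hx)) z hz
  have hLz : L * (z - y) ≤ L * r := mul_le_mul_of_nonneg_left (by linarith [hz.2]) hL0
  have hhalf : |u y| / 2 ≤ |u z| := by
    linarith [abs_sub_abs_le_abs_sub (u y) (u z), abs_sub_comm (u y) (u z)]
  calc u y ^ 2 / 4 = (|u y| / 2) ^ 2 := by rw [div_pow, sq_abs]; norm_num
    _ ≤ |u z| ^ 2 := pow_le_pow_left₀ (by positivity) hhalf 2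
    _ = u z ^ 2 := sq_abs _

theorem mul_sq_div_four_le_integral_sq_of_abs_deriv_le {u u' : ℝ → ℝ}
    (hu : ∀ x, HasDerivAt u (u' x) x) {y r L : ℝ} (hr : 0 ≤ r)
    (hL : ∀ x ∈ Icc y (y + r), |u' x| ≤ L) (hLr : 2 * (L * r) ≤ |u y|) :
    r * (u y ^ 2 / 4) ≤ ∫ z in y..y + r, u z ^ 2 := by
  have hcont : Continuous fun z => u z ^ 2 :=
    (continuous_iff_continuousAt.mpr fun x => (hu x).continuousAt).pow 2
  calc r * (u y ^ 2 / 4) = ∫ _ in y..y + r, u y ^ 2 / 4 := by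
        rw [intervalIntegral.integral_const, smul_eq_mul]; ring
    _ ≤ ∫ z in y..y + r, u z ^ 2 :=
      intervalIntegral.integral_mono_on (by linarith) intervalIntegrable_const
        (hcont.intervalIntegrable _ _) (sq_div_four_le_sq_of_abs_deriv_le hu hL hLr)

theorem tendsto_intervalIntegral_add_const_atTop {f : ℝ → ℝ} (hf : Integrable f) (c : ℝ) :
    Tendsto (fun x => ∫ t in x..x + c, f t) atTop (𝓝 0) := by
  have hIoi : IntegrableOn f (Ioi 0) := hf.integrableOn
  have hlim := (intervalIntegral_tendsto_integral_Ioi 0 hIoi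
    (tendsto_atTop_add_const_right atTop c tendsto_id)).sub
    (intervalIntegral_tendsto_integral_Ioi 0 hIoi tendsto_id)
  rw [sub_self] at hlim
  refine hlim.congr fun x => ?_
  rw [intervalIntegral.integral_interval_sub_left hf.intervalIntegrable hf.intervalIntegrable]
  rfl

section Energy

variable {q u u' : ℝ → ℝ} {M : ℝ}

theorem energy_nonneg (x : ℝ) : 0 ≤ energy u u' x := by unfold energy; positivity

theorem hasDerivAt_energy (hu : ∀ x, HasDerivAt u (u' x) x)
    (hu' : ∀ x, HasDerivAt u' (q x * u x) x) (x : ℝ) :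
    HasDerivAt (energy u u') (2 * u x * u' x * (q x + 1)) x :=
  (((hu' x).pow 2).add ((hu x).pow 2)).congr_deriv (by push_cast; ring)

theorem abs_deriv_energy_le (hq : ∀ x, |q x| ≤ M) (x : ℝ) :
    |2 * u x * u' x * (q x + 1)| ≤ (M + 1) * energy u u' x := by
  have huu' : |2 * u x * u' x| ≤ energy u u' x := by
    rw [abs_le]
    unfold energy
    constructor <;> nlinarith [sq_nonneg (u x + u' x), sq_nonneg (u x - u' x)]
  have hq1 : |q x + 1| ≤ M + 1 := (abs_add_le _ _).trans (by rw [abs_one]; linarith [hq x])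
  rw [abs_mul, mul_comm (M + 1)]
  exact mul_le_mul huu' hq1 (abs_nonneg _) (energy_nonneg x)

theorem energy_mem_Icc_of_mem_Icc (hq : ∀ x, |q x| ≤ M)
    (hu : ∀ x, HasDerivAt u (u' x) x) (hu' : ∀ x, HasDerivAt u' (q x * u x) x)
    {x₀ ℓ z : ℝ} (hz : z ∈ Icc x₀ (x₀ + ℓ)) :
    energy u u' z ∈
      Icc (energy u u' x₀ * exp (-(M + 1) * ℓ)) (energy u u' x₀ * exp ((M + 1) * ℓ)) := by
  have hK : 0 ≤ M + 1 := by linarith [(abs_nonneg _).trans (hq x₀)]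
  have hKz : (M + 1) * (z - x₀) ≤ (M + 1) * ℓ :=
    mul_le_mul_of_nonneg_left (by linarith [hz.2]) hK
  have hbound x := abs_le.mp (abs_deriv_energy_le (u := u) (u' := u') hq x)
  constructor
  · calc energy u u' x₀ * exp (-(M + 1) * ℓ)
        ≤ energy u u' x₀ * exp (-(M + 1) * (z - x₀)) :=
          mul_le_mul_of_nonneg_left (exp_le_exp.mpr (by linarith)) (energy_nonneg x₀)
      _ ≤ energy u u' z :=
          mul_exp_le_of_le_hasDerivAt (hasDerivAt_energy hu hu') (fun x => (hbound x).1) hz.1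
  · calc energy u u' z ≤ energy u u' x₀ * exp ((M + 1) * (z - x₀)) :=
          le_mul_exp_of_hasDerivAt_le (hasDerivAt_energy hu hu') (fun x => (hbound x).2) hz.1
      _ ≤ energy u u' x₀ * exp ((M + 1) * ℓ) :=
          mul_le_mul_of_nonneg_left (exp_le_exp.mpr hKz) (energy_nonneg x₀)

theorem energy_le_integral_sq (hq : ∀ x, |q x| ≤ M)
    (hu : ∀ x, HasDerivAt u (u' x) x) (hu' : ∀ x, HasDerivAt u' (q x * u x) x) (x₀ : ℝ) :
    energy u u' x₀ ≤ 32 * exp (8 * (M + 1)) * ∫ z in x₀..x₀ + 4, u z ^ 2 := by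
  set K := M + 1
  have hK : 0 ≤ K := by linarith [(abs_nonneg _).trans (hq x₀)]
  set w₀ := energy u u' x₀
  have hw₀ : 0 ≤ w₀ := energy_nonneg x₀
  set a := w₀ * exp (-K * 4)
  set b := w₀ * exp (K * 4)
  have hwindow : ∀ z ∈ Icc x₀ (x₀ + 4), energy u u' z ∈ Icc a b := fun z hz =>
    energy_mem_Icc_of_mem_Icc hq hu hu' hz
  obtain ⟨y, hy, hya⟩ := exists_sq_ge_half_of_le_energy hu (a := a) (s := x₀)
    fun z hz => (hwindow z ⟨hz.1, by linarith [hz.2]⟩).1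
  -- with this `r`, `4 b r ^ 2 = a / 4`: on `[y, y + r]`, `u` moves by at most `|u y| / 2`
  set r := exp (-K * 4) / 4
  have hr₀ : 0 ≤ r := by positivity
  have hr : r ≤ 1 := by
    have : exp (-K * 4) ≤ 1 := exp_le_one_iff.mpr (by linarith)
    simp only [r]
    linarith
  have hyr : Icc y (y + r) ⊆ Icc x₀ (x₀ + 4) := Icc_subset_Icc hy.1 (by linarith [hy.2])
  have hderiv : ∀ z ∈ Icc y (y + r), |u' z| ≤ √b := fun z hz => by
    have hz := (hwindow z (hyr hz)).2
    unfold energy at hz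
    exact abs_le_sqrt (by linarith [sq_nonneg (u z)])
  have hLr : 2 * (√b * r) ≤ |u y| := by
    have hexp : exp (K * 4) * exp (-K * 4) = 1 := by rw [← exp_add]; simp
    rw [← sq_le_sq₀ (by positivity) (abs_nonneg _), sq_abs]
    calc (2 * (√b * r)) ^ 2 = 4 * b * r ^ 2 := by
          rw [mul_pow, mul_pow, sq_sqrt (by positivity)]; ring
      _ = a / 4 := by linear_combination (w₀ * exp (-K * 4) / 4) * hexp
      _ ≤ u y ^ 2 := by linarith [show 0 ≤ a by positivity]
  have hu_cont : Continuous u := continuous_iff_continuousAt.mpr fun x => (hu x).continuousAt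
  suffices exp (-8 * K) / 32 * w₀ ≤ ∫ z in x₀..x₀ + 4, u z ^ 2 by
    calc w₀ = 32 * exp (8 * K) * (exp (-8 * K) / 32 * w₀) := by
          rw [neg_mul, exp_neg]; field_simp
      _ ≤ _ := by gcongr
  calc exp (-8 * K) / 32 * w₀ = r * (a / 2 / 4) := by
        rw [show -8 * K = -K * 4 + -K * 4 by ring, exp_add]; ring
    _ ≤ r * (u y ^ 2 / 4) := by gcongr
    _ ≤ ∫ z in y..y + r, u z ^ 2 :=
      mul_sq_div_four_le_integral_sq_of_abs_deriv_le hu hr₀ hderiv hLr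
    _ ≤ ∫ z in x₀..x₀ + 4, u z ^ 2 :=
      intervalIntegral.integral_mono_interval hy.1 (by linarith) (by linarith [hy.2])
        (Eventually.of_forall fun z => sq_nonneg (u z))
        ((hu_cont.pow 2).intervalIntegrable _ _)

end Energy

theorem eigensolution_decay
    (q u u' : ℝ → ℝ) (M : ℝ)
    (hq : ∀ x, |q x| ≤ M)
    (hu' : ∀ x, HasDerivAt u (u' x) x)
    (hu'' : ∀ x, HasDerivAt u' (q x * u x) x)
    (hL2 : MemLp u 2 volume) :
    Tendsto (fun x => Real.sqrt (u' x ^ 2 + u x ^ 2)) atTop (nhds 0) := by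
  have hlocal := tendsto_intervalIntegral_add_const_atTop hL2.integrable_sq 4
  have hdecay : Tendsto (energy u u') atTop (𝓝 0) :=
    squeeze_zero energy_nonneg (energy_le_integral_sq hq hu' hu'')
      (by simpa using hlocal.const_mul (32 * exp (8 * (M + 1))))
  have hsqrt := hdecay.sqrt
  rw [sqrt_zero] at hsqrt
  exact hsqrt
end

section
/- Let u : ℝ → ℝ be twice continuously differentiable with u'' = q u on ℝ, where |q(x)| ≤ M for all x. Then for every x₀ ∈ ℝ, ∫_{x₀−1}^{x₀+1} |u'(x)| dx ≤ C ∫_{x₀−2}^{x₀+2} |u(x)| dx, where C depends only on M. -/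
/-!
On a unit interval `[x, x + 1]` the function `u` differs from its tangent line at `x` by
at most `sup |u' - u' x| ≤ ∫ |u''| ≤ M ∫ |u|`, because `u'' = q u` with `|q| ≤ M`. Hence
`|u' x| ≤ |u (x + 1)| + |u x| + M ∫_{x₀-2}^{x₀+2} |u|` for `|x - x₀| ≤ 1`, and
integrating this over `[x₀ - 1, x₀ + 1]` gives the estimate with `C = 2 M + 2`.
-/

open MeasureTheory intervalIntegral Set

theorem abs_sub_le_integral_of_abs_deriv_le {f f' φ : ℝ → ℝ} {a b : ℝ} (hab : a ≤ b)
    (hf : ∀ x ∈ Icc a b, HasDerivAt f (f' x) x) (hφ : IntegrableOn φ (Icc a b))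
    (hle : ∀ x ∈ Ioo a b, |f' x| ≤ φ x) : |f b - f a| ≤ ∫ x in a..b, φ x := by
  have hcont : ContinuousOn f (Icc a b) := fun x hx => (hf x hx).continuousAt.continuousWithinAt
  have hderiv (x) (hx : x ∈ Ioo a b) : HasDerivWithinAt f (f' x) (Ioi x) x :=
    (hf x (Ioo_subset_Icc_self hx)).hasDerivWithinAt
  rw [abs_sub_le_iff]
  constructor
  · exact sub_le_integral_of_hasDeriv_right_of_le hab hcont hderiv hφ
      fun x hx => (le_abs_self _).trans (hle x hx)
  · have := sub_le_integral_of_hasDeriv_right_of_le hab hcont.neg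
      (fun x hx => (hderiv x hx).neg) hφ fun x hx => (neg_le_abs _).trans (hle x hx)
    simp only [Pi.neg_apply] at this
    linarith

theorem abs_deriv_le_of_abs_deriv_sub_le {f f' : ℝ → ℝ} {x K : ℝ}
    (hf : ∀ t, HasDerivAt f (f' t) t) (hK : ∀ t ∈ Ioo x (x + 1), |f' t - f' x| ≤ K) :
    |f' x| ≤ |f (x + 1)| + |f x| + K := by
  have htangent : |f (x + 1) - f x - f' x| ≤ K := by
    have := abs_sub_le_integral_of_abs_deriv_le (by linarith)
      (fun t _ => (hf t).sub ((hasDerivAt_id t).const_mul (f' x)) |>.congr_deriv (by ring))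
      continuous_const.integrableOn_Icc hK
    simp only [intervalIntegral.integral_const, add_sub_cancel_left, one_smul, Pi.sub_apply,
      id] at this
    convert this using 2
    ring
  have htriangle := abs_sub_abs_le_abs_sub (f' x) (f (x + 1) - f x)
  rw [abs_sub_comm (f' x)] at htriangle
  linarith [abs_sub (f (x + 1)) (f x)]

section SecondOrder

variable {q u u' : ℝ → ℝ} {M : ℝ}

theorem abs_deriv_sub_le_integral_of_deriv_eq_mul (hq : ∀ x, |q x| ≤ M) (hu : Continuous u)
    (hu' : ∀ x, HasDerivAt u' (q x * u x) x) {x t : ℝ} (hxt : x ≤ t) :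
    |u' t - u' x| ≤ M * ∫ s in x..t, |u s| := by
  rw [← intervalIntegral.integral_const_mul]
  refine abs_sub_le_integral_of_abs_deriv_le hxt (fun s _ => hu' s)
    ((continuous_const.mul hu.abs).integrableOn_Icc) fun s _ => ?_
  rw [abs_mul]
  exact mul_le_mul_of_nonneg_right (hq s) (abs_nonneg _)

theorem abs_deriv_le_of_deriv_eq_mul (hq : ∀ x, |q x| ≤ M) (hu : ∀ x, HasDerivAt u (u' x) x)
    (hu' : ∀ x, HasDerivAt u' (q x * u x) x) {a b x : ℝ} (hax : a ≤ x) (hxb : x + 1 ≤ b) :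
    |u' x| ≤ |u (x + 1)| + |u x| + M * ∫ s in a..b, |u s| := by
  have hcont : Continuous u := continuous_iff_continuousAt.2 fun x => (hu x).continuousAt
  have hM : 0 ≤ M := (abs_nonneg _).trans (hq 0)
  refine abs_deriv_le_of_abs_deriv_sub_le hu fun t ⟨hxt, htx⟩ => ?_
  calc |u' t - u' x| ≤ M * ∫ s in x..t, |u s| :=
        abs_deriv_sub_le_integral_of_deriv_eq_mul hq hcont hu' hxt.le
    _ ≤ M * ∫ s in a..b, |u s| := by
        gcongr
        exact integral_mono_interval hax hxt.le (by linarith)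
          (Filter.Eventually.of_forall fun _ => abs_nonneg _) (hcont.abs.intervalIntegrable _ _)

end SecondOrder

theorem local_derivative_estimate (M : ℝ) (hM : 0 ≤ M) :
    ∃ C > 0, ∀ q u u' : ℝ → ℝ,
      (∀ x, |q x| ≤ M) →
      (∀ x, HasDerivAt u (u' x) x) →
      (∀ x, HasDerivAt u' (q x * u x) x) →
      Continuous u' →
      ∀ x₀ : ℝ,
        (∫ x in (x₀ - 1)..(x₀ + 1), |u' x|) ≤ C * ∫ x in (x₀ - 2)..(x₀ + 2), |u x| := by
  refine ⟨2 * M + 2, by positivity, fun q u u' hq hu hu' hu'c x₀ => ?_⟩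
  have hcont : Continuous u := continuous_iff_continuousAt.2 fun x => (hu x).continuousAt
  set I := ∫ x in (x₀ - 2)..(x₀ + 2), |u x|
  have hsub {a b : ℝ} (ha : x₀ - 2 ≤ a) (hab : a ≤ b) (hb : b ≤ x₀ + 2) :
      ∫ x in a..b, |u x| ≤ I :=
    integral_mono_interval ha hab hb (Filter.Eventually.of_forall fun _ => abs_nonneg _)
      (hcont.abs.intervalIntegrable _ _)
  have hshift : ∫ x in (x₀ - 1)..(x₀ + 1), |u (x + 1)| ≤ I := by
    rw [integral_comp_add_right (fun x => |u x|)]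
    exact hsub (by linarith) (by linarith) (by linarith)
  have hright : Continuous fun x => |u (x + 1)| := (hcont.comp (continuous_add_const 1)).abs
  calc ∫ x in (x₀ - 1)..(x₀ + 1), |u' x|
      ≤ ∫ x in (x₀ - 1)..(x₀ + 1), (|u (x + 1)| + |u x| + M * I) :=
        integral_mono_on (by linarith) (hu'c.abs.intervalIntegrable _ _)
          ((hright.add hcont.abs).add continuous_const |>.intervalIntegrable _ _)
          fun x hx =>
            abs_deriv_le_of_deriv_eq_mul hq hu hu' (by linarith [hx.1]) (by linarith [hx.2])
    _ = (∫ x in (x₀ - 1)..(x₀ + 1), |u (x + 1)|) + (∫ x in (x₀ - 1)..(x₀ + 1), |u x|)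
          + 2 * (M * I) := by
        rw [intervalIntegral.integral_add
            ((hright.intervalIntegrable _ _).add (hcont.abs.intervalIntegrable _ _))
            intervalIntegrable_const,
          intervalIntegral.integral_add (hright.intervalIntegrable _ _)
            (hcont.abs.intervalIntegrable _ _),
          intervalIntegral.integral_const, smul_eq_mul]
        ring
    _ ≤ I + I + 2 * (M * I) := by
        gcongr
        exact hsub (by linarith) (by linarith) (by linarith)
    _ = (2 * M + 2) * I := by ring
end

section
/- Let T : ℝ² → ℝ² be linear maps T(a,b) (transfer matrices) indexed by pairs, satisfying the cocycle identity T(a,c) = T(b,c) T(a,b), and suppose ‖T(0,q) − T(q,2q)‖ ≤ η and ‖T(0,−q) − T(0,q)⁻¹‖ ≤ η with η ≤ 1/8, where T(0,q) ∈ SL(2,ℝ). Then for every unit vector φ ∈ ℝ², max{ ‖T(0,−q)φ‖, ‖T(0,q)φ‖, ‖T(0,2q)φ‖ } ≥ 1/8. -/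
open Matrix
set_option maxHeartbeats 1600000

theorem transfer_matrix_lower_bound
    (q : ℝ) (T : ℝ → ℝ → Matrix (Fin 2) (Fin 2) ℝ)
    (hcoc : ∀ a b c : ℝ, T a c = T b c * T a b)
    (hdet : (T 0 q).det = 1)
    (η : ℝ) (hη : η ≤ 1 / 8)
    (h1 : ‖Matrix.toEuclideanCLM (𝕜 := ℝ) (T 0 q - T q (2 * q))‖ ≤ η)
    (h2 : ‖Matrix.toEuclideanCLM (𝕜 := ℝ) (T 0 (-q) - (T 0 q)⁻¹)‖ ≤ η) :
    ∀ φ : EuclideanSpace ℝ (Fin 2), ‖φ‖ = 1 →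
      (1 / 8 : ℝ) ≤
        max ‖Matrix.toEuclideanCLM (𝕜 := ℝ) (T 0 (-q)) φ‖
          (max ‖Matrix.toEuclideanCLM (𝕜 := ℝ) (T 0 q) φ‖
            ‖Matrix.toEuclideanCLM (𝕜 := ℝ) (T 0 (2 * q)) φ‖) := by
  intro φ hφ
  set f := Matrix.toEuclideanCLM (𝕜 := ℝ) (n := Fin 2) with hf
  set B := T 0 q with hB
  set t := B.trace with htdef
  have hdet' : B 0 0 * B 1 1 - B 0 1 * B 1 0 = 1 := by
    rw [← Matrix.det_fin_two]; exact hdet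
  have hCH : B * B = t • B - 1 := by
    ext i j
    fin_cases i <;> fin_cases j <;>
      simp [Matrix.mul_apply, Fin.sum_univ_two, Matrix.trace_fin_two, Matrix.one_apply,
        htdef] <;>
      nlinarith [hdet']
  have hinv : B⁻¹ = t • (1 : Matrix (Fin 2) (Fin 2) ℝ) - B := by
    apply Matrix.inv_eq_right_inv
    rw [Matrix.mul_sub, Matrix.mul_smul, Matrix.mul_one, hCH, sub_sub_cancel]
  set x := f B φ with hx
  set r := ‖x‖ with hr
  have hr0 : 0 ≤ r := norm_nonneg _
  have hη0 : 0 ≤ η := le_trans (norm_nonneg _) h1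
  -- f B (f B φ) = t • x - φ
  have h5 : f B x = t • x - φ := by
    have := congrArg (fun M => f M φ) hCH
    simpa [_root_.map_mul, _root_.map_sub, _root_.map_smul, _root_.map_one, ContinuousLinearMap.mul_apply] using this
  -- bound on the 2q term
  set e1 := f (B - T q (2 * q)) x with he1
  have he1n : ‖e1‖ ≤ η * r := by
    calc ‖e1‖ ≤ ‖f (B - T q (2 * q))‖ * ‖x‖ := (f (B - T q (2 * q))).le_opNorm x
    _ ≤ η * r := by
        apply mul_le_mul h1 le_rfl (norm_nonneg _) hη0
  have e3 : f (T 0 (2 * q)) φ = (t • x - φ) - e1 := by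
    have hT2 : T 0 (2 * q) = T q (2 * q) * B := hcoc 0 q (2 * q)
    have h6 : f (T 0 (2 * q)) φ = f (T q (2 * q)) x := by
      rw [hT2, _root_.map_mul]; rfl
    rw [h6, ← h5, he1, _root_.map_sub]
    simp
  have i3 : 1 - |t| * r - η * r ≤ ‖f (T 0 (2 * q)) φ‖ := by
    have hφeq : φ = t • x - e1 - f (T 0 (2 * q)) φ := by rw [e3]; abel
    have : ‖φ‖ ≤ ‖t • x‖ + ‖e1‖ + ‖f (T 0 (2 * q)) φ‖ := by
      calc ‖φ‖ = ‖t • x - e1 - f (T 0 (2 * q)) φ‖ := by rw [← hφeq]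
      _ ≤ ‖t • x - e1‖ + ‖f (T 0 (2 * q)) φ‖ := norm_sub_le _ _
      _ ≤ ‖t • x‖ + ‖e1‖ + ‖f (T 0 (2 * q)) φ‖ := by
          gcongr; exact norm_sub_le _ _
    rw [hφ, norm_smul, Real.norm_eq_abs] at this
    linarith [he1n]
  -- bound on the -q term
  set e2 := f (T 0 (-q) - B⁻¹) φ with he2
  have he2n : ‖e2‖ ≤ η := by
    calc ‖e2‖ ≤ ‖f (T 0 (-q) - B⁻¹)‖ * ‖φ‖ := (f _).le_opNorm φ
    _ ≤ η := by rw [hφ, mul_one]; exact h2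
  have einv : f (T 0 (-q)) φ = (t • φ - x) + e2 := by
    have h7 : f B⁻¹ φ = t • φ - x := by
      have := congrArg (fun M => f M φ) hinv
      simpa [_root_.map_sub, _root_.map_smul, _root_.map_one] using this
    rw [he2, _root_.map_sub, ← h7]
    simp
  have i1 : |t| - r - η ≤ ‖f (T 0 (-q)) φ‖ := by
    have h8 : t • φ = f (T 0 (-q)) φ + x - e2 := by rw [einv]; abel
    have : ‖t • φ‖ ≤ ‖f (T 0 (-q)) φ‖ + ‖x‖ + ‖e2‖ := by
      calc ‖t • φ‖ = ‖f (T 0 (-q)) φ + x - e2‖ := by rw [← h8]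
      _ ≤ ‖f (T 0 (-q)) φ + x‖ + ‖e2‖ := norm_sub_le _ _
      _ ≤ ‖f (T 0 (-q)) φ‖ + ‖x‖ + ‖e2‖ := by gcongr; exact norm_add_le _ _
    rw [norm_smul, Real.norm_eq_abs, hφ, mul_one] at this
    linarith [he2n]
  -- case analysis
  rcases le_or_gt (1 / 8 : ℝ) r with hcase | hcase
  · exact le_max_of_le_right (le_max_left _ _ |>.trans' hcase)
  rcases le_or_gt (3 / 8 : ℝ) |t| with htc | htc
  · refine le_max_of_le_left ?_
    linarith
  · refine le_max_of_le_right (le_max_of_le_right ?_)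
    nlinarith [abs_nonneg t]
end
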